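/- The involution code ĉ : Ĩ_n → ℕⁿ \ ℙⁿ is injective. -/

import Mathlib

open scoped TensorProduct

/-- Membership in the affine symmetric group `S̃_n`, viewed inside `Equiv.Perm ℤ`. -/
def IsAffine (n : ℕ) (π : Equiv.Perm ℤ) : Prop :=
  (∀ i : ℤ, π (i + n) = π i + n) ∧
  (∑ i ∈ Finset.Icc (1 : ℤ) (n : ℤ), π i) = ∑ i ∈ Finset.Icc (1 : ℤ) (n : ℤ), i

/-- The underlying function of the affine reflection `t_{ij}`. -/
def affTFun (n : ℕ) (i j k : ℤ) : ℤ :=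
  if (k - i) % (n : ℤ) = 0 then k - i + j
  else if (k - j) % (n : ℤ) = 0 then k - j + i
  else k

theorem affTFun_involutive {n : ℕ} {i j : ℤ} (h : ¬ (j - i) % (n : ℤ) = 0) :
    Function.Involutive (affTFun n i j) := by
  have key : ∀ a : ℤ, a % (n : ℤ) = 0 ↔ (n : ℤ) ∣ a :=
    fun a => (@Int.dvd_iff_emod_eq_zero (n : ℤ) a).symm
  rw [key] at h
  intro k
  by_cases h1 : (n : ℤ) ∣ (k - i)
  · have h2 : ¬ (n : ℤ) ∣ (k - i + j - i) := by
      intro hd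
      apply h
      have h5 : j - i = (k - i + j - i) - (k - i) := by ring
      rw [h5]
      exact dvd_sub hd h1
    have h3 : (n : ℤ) ∣ (k - i + j - j) := by
      have h5 : k - i + j - j = k - i := by ring
      rw [h5]; exact h1
    have e1 : affTFun n i j k = k - i + j := by simp [affTFun, key, h1]
    have e2 : affTFun n i j (k - i + j) = k := by
      simp only [affTFun, key]
      rw [if_neg h2, if_pos h3]
      ring
    rw [e1, e2]
  · by_cases h2 : (n : ℤ) ∣ (k - j)
    · have h3 : (n : ℤ) ∣ (k - j + i - i) := by
        have h5 : k - j + i - i = k - j := by ring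
        rw [h5]; exact h2
      have e1 : affTFun n i j k = k - j + i := by simp [affTFun, key, h1, h2]
      have e2 : affTFun n i j (k - j + i) = k := by
        simp only [affTFun, key]
        rw [if_pos h3]
        ring
      rw [e1, e2]
    · have e1 : affTFun n i j k = k := by simp [affTFun, key, h1, h2]
      rw [e1, e1]

/-- The affine reflection `t_{ij}` (interpreted as the identity when `i ≡ j (mod n)`). -/
noncomputable def affT (n : ℕ) (i j : ℤ) : Equiv.Perm ℤ :=
  if h : (j - i) % (n : ℤ) = 0 then 1
  else Function.Involutive.toPerm _ (affTFun_involutive h)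

/-- The simple reflection `s_i = t_{i,i+1}` of `S̃_n`. -/
noncomputable def affS (n : ℕ) (i : ℤ) : Equiv.Perm ℤ := affT n i (i + 1)

/-- Coxeter length: minimal length of a word in the simple reflections `s_1, …, s_n`. -/
noncomputable def wordLength (n : ℕ) (π : Equiv.Perm ℤ) : ℕ :=
  sInf {l : ℕ | ∃ w : List ℤ,
    (∀ x ∈ w, 1 ≤ x ∧ x ≤ (n : ℤ)) ∧ (w.map (affS n)).prod = π ∧ w.length = l}

/-- The set of inversions of `π`, up to the diagonal translation relation. -/
def InvPair (π : Equiv.Perm ℤ) : Type :=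
  {p : ℤ × ℤ // p.1 < p.2 ∧ π p.2 < π p.1}

/-- The number of equivalence classes of inversions of `π` under
`(a,b) ~ (a + mn, b + mn)`. -/
noncomputable def invLength (n : ℕ) (π : Equiv.Perm ℤ) : ℕ :=
  Nat.card (Quot fun p q : InvPair π =>
    ∃ m : ℤ, q.1.1 = p.1.1 + m * n ∧ q.1.2 = p.1.2 + m * n)

/-- Entry `c_i` of the code of an affine permutation. -/
noncomputable def codeEntry (π : Equiv.Perm ℤ) (i : ℤ) : ℕ :=
  Nat.card {j : ℤ // i < j ∧ π j < π i}

/-- Entry `ĉ_i` of the involution code of an affine involution. -/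
noncomputable def icodeEntry (z : Equiv.Perm ℤ) (i : ℤ) : ℕ :=
  Nat.card {j : ℤ // i < j ∧ z j < z i ∧ z j ≤ i}

/-- `ℓ'(z)`: `n` minus the number of orbits of `z` acting on `ℤ/nℤ`. -/
noncomputable def lprime (n : ℕ) (z : Equiv.Perm ℤ) : ℕ :=
  n - Nat.card (Quot fun a b : ZMod n => ((z (a.val : ℤ) : ℤ) : ZMod n) = b)

/-- The characterizing properties of the Demazure (0-Hecke) product on `S̃_n`:
closure, associativity, `s_i ∘ s_i = s_i`, and agreement with the group product
on length-additive factorizations. -/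
def IsDemazure (n : ℕ) (D : Equiv.Perm ℤ → Equiv.Perm ℤ → Equiv.Perm ℤ) : Prop :=
  (∀ a b, IsAffine n a → IsAffine n b → IsAffine n (D a b)) ∧
  (∀ a b c, IsAffine n a → IsAffine n b → IsAffine n c →
    D (D a b) c = D a (D b c)) ∧
  (∀ i : ℤ, D (affS n i) (affS n i) = affS n i) ∧
  (∀ a b, IsAffine n a → IsAffine n b →
    wordLength n (a * b) = wordLength n a + wordLength n b → D a b = a * b)

/-- The set of Hecke atoms `{π : π⁻¹ ∘ π = z}`. -/
def AHecke (n : ℕ) (D : Equiv.Perm ℤ → Equiv.Perm ℤ → Equiv.Perm ℤ)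
    (z : Equiv.Perm ℤ) : Set (Equiv.Perm ℤ) :=
  {π | IsAffine n π ∧ D π⁻¹ π = z}

/-- The set of atoms: minimal-length Hecke atoms. -/
def DemAtoms (n : ℕ) (D : Equiv.Perm ℤ → Equiv.Perm ℤ → Equiv.Perm ℤ)
    (z : Equiv.Perm ℤ) : Set (Equiv.Perm ℤ) :=
  {π | π ∈ AHecke n D z ∧ ∀ σ ∈ AHecke n D z, wordLength n π ≤ wordLength n σ}

/-- The Bruhat covering relation on `S̃_n`. -/
def BruhatCov (n : ℕ) (a b : Equiv.Perm ℤ) : Prop :=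
  (∃ i j : ℤ, i < j ∧ (j - i) % (n : ℤ) ≠ 0 ∧ b = a * affT n i j) ∧
  wordLength n b = wordLength n a + 1

/-- The Bruhat order on `S̃_n`. -/
def BruhatLE (n : ℕ) : Equiv.Perm ℤ → Equiv.Perm ℤ → Prop :=
  Relation.ReflTransGen (BruhatCov n)

/-- The covering relation of the Bruhat order restricted to involutions in `S̃_n`. -/
def BruhatCovI (n : ℕ) (y z : Equiv.Perm ℤ) : Prop :=
  IsAffine n y ∧ IsAffine n z ∧ y⁻¹ = y ∧ z⁻¹ = z ∧
  BruhatLE n y z ∧ y ≠ z ∧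
  ∀ w : Equiv.Perm ℤ, IsAffine n w → w⁻¹ = w →
    BruhatLE n y w → BruhatLE n w z → w = y ∨ w = z

/-- Strict dominance order on partitions (written as weakly decreasing functions). -/
def DomLT (p q : ℕ → ℕ) : Prop :=
  p ≠ q ∧ ∀ k : ℕ, ∑ i ∈ Finset.range k, p i ≤ ∑ i ∈ Finset.range k, q i

/-- The shape `λ(π)`: the transpose of the partition sorting the code of `π⁻¹`,
recorded as the weakly decreasing function `k ↦ λ(π)_{k+1}`. -/
noncomputable def affShape (n : ℕ) (π : Equiv.Perm ℤ) : ℕ → ℕ :=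
  fun k => Multiset.countP (fun x => k < x)
    ((Finset.Icc (1 : ℤ) (n : ℤ)).val.map (codeEntry π⁻¹))

/-- The shape `μ(z)`: the transpose of the partition sorting the involution code of `z`,
recorded as the weakly decreasing function `k ↦ μ(z)_{k+1}`. -/
noncomputable def invShape (n : ℕ) (z : Equiv.Perm ℤ) : ℕ → ℕ :=
  fun k => Multiset.countP (fun x => k < x)
    ((Finset.Icc (1 : ℤ) (n : ℤ)).val.map (icodeEntry z))

/-- The weakly decreasing rearrangement of a multiset of naturals, padded by zeros. -/
noncomputable def rearr (s : Multiset ℕ) : ℕ → ℕ :=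
  fun k => ((s.sort (· ≤ ·)).reverse).getD k 0

/-- Remove the entries of a list of integers that repeat an earlier residue mod `n`. -/
def dedupMod (n : ℕ) : List ℤ → List ℤ
  | [] => []
  | x :: xs => x :: dedupMod n (xs.filter fun y => (y - x) % (n : ℤ) ≠ 0)
termination_by l => l.length
decreasing_by
  simp only [List.length_cons]
  exact Nat.lt_succ_of_le (by
    simp only [List.length_unattach]
    exact (List.length_filter_le _ _).trans (by simp))

/-- The window `[[z(a₁), a₁, z(a₂), a₂, …]]` of `α_min(z)⁻¹`, where `a₁ < a₂ < ⋯`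
are the elements `a ∈ [n]` with `a ≤ z(a)`. -/
noncomputable def aminWindow (n : ℕ) (z : Equiv.Perm ℤ) : List ℤ :=
  dedupMod n
    ((((Finset.Icc (1 : ℤ) (n : ℤ)).sort (· ≤ ·)).filter fun a => a ≤ z a).flatMap
      fun a => [z a, a])

/-- Cyclically decreasing elements of `S̃_n`. -/
def IsCycDec (n : ℕ) (π : Equiv.Perm ℤ) : Prop :=
  ∃ w : List ℤ,
    (∀ x ∈ w, 1 ≤ x ∧ x ≤ (n : ℤ)) ∧ (w.map (affS n)).prod = π ∧
    w.length = wordLength n π ∧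
    w.Pairwise fun a b => (a + 1 - b) % (n : ℤ) ≠ 0

/-- The coefficient of the monomial `∏ₖ xₖ₊₁^(α k)` in Lam's affine Stanley symmetric
function `F_π`: the number of length-additive factorizations of `π` into cyclically
decreasing factors of lengths prescribed by `α`. -/
noncomputable def stanleyCoeff (n : ℕ) (π : Equiv.Perm ℤ) (α : ℕ →₀ ℕ) : ℕ :=
  Nat.card {f : ℕ → Equiv.Perm ℤ //
    (∀ k, IsCycDec n (f k)) ∧ (∀ k, wordLength n (f k) = α k) ∧
    (∑ k ∈ α.support, α k) = wordLength n π ∧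
    ∃ N : ℕ, (∀ k, N ≤ k → f k = 1) ∧ ((List.range N).map f).prod = π}

/-- The set `Φ⁻_r(y)` of Bruhat covers of `y` of the form `τⁿ_{i r}(y)` with `i < r`
and `i ∉ {r, y(r)} + nℤ`. -/
def PhiMinus (n : ℕ) (τ : ℤ → ℤ → Equiv.Perm ℤ → Equiv.Perm ℤ)
    (y : Equiv.Perm ℤ) (r : ℤ) : Set (Equiv.Perm ℤ) :=
  {z | BruhatCovI n y z ∧ ∃ i : ℤ, i < r ∧ (i - r) % (n : ℤ) ≠ 0 ∧
    (i - y r) % (n : ℤ) ≠ 0 ∧ z = τ i r y}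

/-- The set `Φ⁺_r(y)` of Bruhat covers of `y` of the form `τⁿ_{r j}(y)` with `r < j`
and `j ∉ {r, y(r)} + nℤ`. -/
def PhiPlus (n : ℕ) (τ : ℤ → ℤ → Equiv.Perm ℤ → Equiv.Perm ℤ)
    (y : Equiv.Perm ℤ) (r : ℤ) : Set (Equiv.Perm ℤ) :=
  {z | BruhatCovI n y z ∧ ∃ j : ℤ, r < j ∧ (j - r) % (n : ℤ) ≠ 0 ∧
    (j - y r) % (n : ℤ) ≠ 0 ∧ z = τ r j y}

/-- The affine symmetric group as a subtype of `Equiv.Perm ℤ`. -/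
abbrev AffPerm (n : ℕ) := {π : Equiv.Perm ℤ // IsAffine n π}

/-- The coproduct `Δ(π) = Σ_{π ≐ π'π''} π' ⊗ π''` on `ℚ S̃_n`. -/
noncomputable def affComul (n : ℕ) :
    (AffPerm n →₀ ℚ) →ₗ[ℚ] TensorProduct ℚ (AffPerm n →₀ ℚ) (AffPerm n →₀ ℚ) :=
  Finsupp.lift _ ℚ _ fun π : AffPerm n =>
    ∑ᶠ p ∈ {p : AffPerm n × AffPerm n |
        p.1.val * p.2.val = π.val ∧
        wordLength n π.val = wordLength n p.1.val + wordLength n p.2.val},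
      (Finsupp.single p.1 (1 : ℚ)) ⊗ₜ[ℚ] (Finsupp.single p.2 (1 : ℚ))
/-!
Call `i` a visible descent of `z` if `z (i + 1) < z i` and `z (i + 1) ≤ i`. These are exactly
the `i` with `ĉ_{i+1} < ĉ_i`, so they can be read off the code, and every involution other than
the identity has one. At a visible descent, replacing `z` by `s_i z s_i` (or by `z s_i` when `z`
swaps `i` and `i + 1`) gives an affine involution whose code arises from `ĉ(z)` by the rule
`(ĉ_i, ĉ_{i+1}) ↦ (ĉ_{i+1}, ĉ_i - 1)` on the residue classes of `i` and `i + 1`, and the step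
can be undone. Induction on `ĉ_1 + ⋯ + ĉ_n` then shows that two involutions with the same code
coincide.
-/

namespace AffineInvolution

open Function

variable {n : ℕ}

lemma le_or_le_neg_of_dvd {m d : ℤ} (h : m ∣ d) (hd : d ≠ 0) : m ≤ d ∨ d ≤ -m := by
  rcases hd.lt_or_gt with hd | hd
  · exact .inr (le_neg.1 (Int.le_of_dvd (neg_pos.2 hd) (dvd_neg.2 h)))
  · exact .inl (Int.le_of_dvd hd h)

def IsPeriodic (n : ℕ) (z : Equiv.Perm ℤ) : Prop := ∀ i : ℤ, z (i + n) = z i + n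

namespace IsPeriodic

variable {y z : Equiv.Perm ℤ}

lemma apply_eq_of_dvd (hz : IsPeriodic n z) {i j : ℤ} (h : (n : ℤ) ∣ j - i) :
    z j = z i + (j - i) := by
  obtain ⟨k, hk⟩ := h
  have hper : Periodic (fun x => z x - x) (n : ℤ) := fun x => by simp only [hz x]; ring
  have := hper.int_mul k i
  rw [Int.cast_id] at this
  obtain rfl : j = i + k * n := by linarith
  linarith

lemma apply_add_of_dvd (hz : IsPeriodic n z) {m : ℤ} (hm : (n : ℤ) ∣ m) (i : ℤ) :
    z (i + m) = z i + m := by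
  rw [hz.apply_eq_of_dvd (i := i) (by simpa using hm)]; ring

lemma mul (hy : IsPeriodic n y) (hz : IsPeriodic n z) : IsPeriodic n (y * z) := fun x => by
  simp only [Equiv.Perm.mul_apply, hz x, hy (z x)]

lemma apply_eq_self_of_dvd (hz : IsPeriodic n z) (hinv : Involutive z) {x : ℤ}
    (h : (n : ℤ) ∣ z x - x) : z x = x := by
  have := hz.apply_eq_of_dvd h
  rw [hinv x] at this
  omega

end IsPeriodic

variable {z : Equiv.Perm ℤ}

lemma finite_setOf_lt_apply_le (hn : 0 < n) (hz : IsPeriodic n z) (i t : ℤ) :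
    {j : ℤ | i < j ∧ z j ≤ t}.Finite := by
  have hne : (Finset.Ico (0 : ℤ) n).Nonempty := ⟨0, by simp [hn]⟩
  set B := (Finset.Ico (0 : ℤ) n).sup' hne fun r => r - z r
  refine (Set.finite_Ioc i (t + B)).subset fun j ⟨hij, hjt⟩ => ⟨hij, ?_⟩
  have hnpos : (0 : ℤ) < n := by exact_mod_cast hn
  have hmem : j % n ∈ Finset.Ico (0 : ℤ) n :=
    Finset.mem_Ico.2 ⟨Int.emod_nonneg _ hnpos.ne', Int.emod_lt_of_pos _ hnpos⟩
  have hzj : z j = z (j % n) + (j - j % n) :=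
    hz.apply_eq_of_dvd (Int.dvd_self_sub_emod)
  have := Finset.le_sup' (fun r => r - z r) hmem
  omega

def icodeSet (z : Equiv.Perm ℤ) (i : ℤ) : Set ℤ := {j | i < j ∧ z j < z i ∧ z j ≤ i}

lemma icodeEntry_eq_ncard (z : Equiv.Perm ℤ) (i : ℤ) : icodeEntry z i = (icodeSet z i).ncard :=
  Nat.card_coe_set_eq _

lemma icodeSet_finite (hn : 0 < n) (hz : IsPeriodic n z) (i : ℤ) : (icodeSet z i).Finite :=
  (finite_setOf_lt_apply_le hn hz i i).subset fun _ ⟨hij, _, hji⟩ => ⟨hij, hji⟩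

lemma icodeEntry_add_of_dvd (hz : IsPeriodic n z) {m : ℤ} (hm : (n : ℤ) ∣ m) (i : ℤ) :
    icodeEntry z (i + m) = icodeEntry z i := by
  refine (Nat.card_congr (Equiv.subtypeEquiv (Equiv.addRight m) fun j => ?_)).symm
  simp only [Equiv.coe_addRight, hz.apply_add_of_dvd hm]
  omega

lemma icodeEntry_eq_of_dvd (hz : IsPeriodic n z) {i j : ℤ} (h : (n : ℤ) ∣ j - i) :
    icodeEntry z j = icodeEntry z i := by
  simpa using icodeEntry_add_of_dvd hz h i

/-- With all three comparisons strict, conjugation by `s_i` preserves each of them except for a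
pair that `s_i` swaps (`affS_lt_affS_iff`). -/
def strictIcodeSet (z : Equiv.Perm ℤ) (k : ℤ) : Set ℤ := {j | k < j ∧ z j < z k ∧ z j < k}

lemma strictIcodeSet_finite (hn : 0 < n) (hz : IsPeriodic n z) (k : ℤ) :
    (strictIcodeSet z k).Finite :=
  (icodeSet_finite hn hz k).subset fun _ ⟨h1, h2, h3⟩ => ⟨h1, h2, h3.le⟩

lemma icodeEntry_eq_ncard_strictIcodeSet (hn : 0 < n) (hz : IsPeriodic n z) (hinv : Involutive z)
    (k : ℤ) : icodeEntry z k = (strictIcodeSet z k).ncard + if k < z k then 1 else 0 := by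
  have hmem : ∀ j, j ∈ icodeSet z k ↔ (j = z k ∧ k < z k) ∨ j ∈ strictIcodeSet z k := by
    intro j
    simp only [icodeSet, strictIcodeSet, Set.mem_ofPred_eq]
    by_cases hj : j = z k
    · subst hj
      rw [hinv k]
      omega
    · have : z j ≠ k := fun h => hj (hinv.eq_iff.1 h)
      simp only [hj, false_and, false_or]
      omega
  rw [icodeEntry_eq_ncard]
  split_ifs with hk
  · have hins : icodeSet z k = insert (z k) (strictIcodeSet z k) := by
      ext j; simp only [hmem, hk, and_true, Set.mem_insert_iff]
    have hnotin : z k ∉ strictIcodeSet z k := fun h => by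
      have := h.2.2; rw [hinv k] at this; exact lt_irrefl _ this
    rw [hins, Set.ncard_insert_of_notMem hnotin (strictIcodeSet_finite hn hz k)]
  · have heq : icodeSet z k = strictIcodeSet z k := by
      ext j; simp only [hmem, hk, and_false, false_or]
    rw [heq, add_zero]

lemma involutive_conj {α : Type*} {s w : Equiv.Perm α} (hs : Involutive s) (hw : Involutive w) :
    Involutive (s * w * s) := fun x => by
  simp only [Equiv.Perm.mul_apply, hs _, hw _]

section SimpleReflection

variable {i k : ℤ}

lemma affS_involutive (n : ℕ) (i : ℤ) : Involutive (affS n i) := by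
  unfold affS affT
  split_ifs with h
  · exact fun _ => rfl
  · simpa using affTFun_involutive h

lemma affS_apply (hn2 : 2 ≤ n) (i k : ℤ) : affS n i k =
    if (n : ℤ) ∣ k - i then k + 1 else if (n : ℤ) ∣ k - (i + 1) then k - 1 else k := by
  have h1 : ¬ (i + 1 - i) % (n : ℤ) = 0 := by
    rw [add_sub_cancel_left, Int.emod_eq_of_lt zero_le_one (by omega)]
    exact one_ne_zero
  rw [affS, affT, dif_neg h1, Involutive.coe_toPerm]
  simp only [affTFun, ← Int.dvd_iff_emod_eq_zero]
  split_ifs <;> ring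

lemma affS_of_dvd (hn2 : 2 ≤ n) (h : (n : ℤ) ∣ k - i) : affS n i k = k + 1 := by
  rw [affS_apply hn2, if_pos h]

lemma affS_of_dvd_succ (hn2 : 2 ≤ n) (h : (n : ℤ) ∣ k - (i + 1)) : affS n i k = k - 1 := by
  have h0 : ¬ (n : ℤ) ∣ k - i := fun h0 => by
    have := Int.le_of_dvd one_pos (by simpa using dvd_sub h0 h)
    omega
  rw [affS_apply hn2, if_neg h0, if_pos h]

lemma affS_of_not_dvd (hn2 : 2 ≤ n) (h0 : ¬ (n : ℤ) ∣ k - i) (h1 : ¬ (n : ℤ) ∣ k - (i + 1)) :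
    affS n i k = k := by
  rw [affS_apply hn2, if_neg h0, if_neg h1]

lemma affS_self (hn2 : 2 ≤ n) (i : ℤ) : affS n i i = i + 1 := affS_of_dvd hn2 (by simp)

lemma affS_succ (hn2 : 2 ≤ n) (i : ℤ) : affS n i (i + 1) = i := by
  rw [affS_of_dvd_succ hn2 (by simp), add_sub_cancel_right]

lemma affS_le (hn2 : 2 ≤ n) (i k : ℤ) : affS n i k ≤ k + 1 := by
  rw [affS_apply hn2]; split_ifs <;> omega

lemma le_affS (hn2 : 2 ≤ n) (i k : ℤ) : k - 1 ≤ affS n i k := by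
  rw [affS_apply hn2]; split_ifs <;> omega

lemma isPeriodic_affS (hn2 : 2 ≤ n) (i : ℤ) : IsPeriodic n (affS n i) := fun k => by
  have hshift : ∀ c, (n : ℤ) ∣ k + n - c ↔ (n : ℤ) ∣ k - c := fun c => by
    rw [show k + n - c = k - c + n by ring, dvd_add_left (dvd_refl _)]
  simp only [affS_apply hn2, hshift]
  split_ifs <;> ring

lemma affS_lt_affS_iff (hn2 : 2 ≤ n) {u v : ℤ} (h : v = affS n i u → u = v) :
    affS n i u < affS n i v ↔ u < v := by
  have hdist := fun {d : ℤ} (hd : (n : ℤ) ∣ d) (h0 : d ≠ 0) => le_or_le_neg_of_dvd hd h0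
  have hn : (2 : ℤ) ≤ n := by exact_mod_cast hn2
  by_cases hu0 : (n : ℤ) ∣ u - i
  · rw [affS_of_dvd hn2 hu0] at h ⊢
    by_cases hv0 : (n : ℤ) ∣ v - i
    · rw [affS_of_dvd hn2 hv0]; omega
    by_cases hv1 : (n : ℤ) ∣ v - (i + 1)
    · rw [affS_of_dvd_succ hn2 hv1]
      have := hdist (show (n : ℤ) ∣ v - u - 1 by
        rw [show v - u - 1 = v - (i + 1) - (u - i) by ring]; exact dvd_sub hv1 hu0)
      omega
    rw [affS_of_not_dvd hn2 hv0 hv1]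
    have : v ≠ u := by rintro rfl; exact hv0 hu0
    have : v ≠ u + 1 := by rintro rfl; exact hv1 (by simpa using hu0)
    omega
  by_cases hu1 : (n : ℤ) ∣ u - (i + 1)
  · rw [affS_of_dvd_succ hn2 hu1] at h ⊢
    by_cases hv0 : (n : ℤ) ∣ v - i
    · rw [affS_of_dvd hn2 hv0]
      have := hdist (show (n : ℤ) ∣ u - v - 1 by
        rw [show u - v - 1 = u - (i + 1) - (v - i) by ring]; exact dvd_sub hu1 hv0)
      omega
    by_cases hv1 : (n : ℤ) ∣ v - (i + 1)
    · rw [affS_of_dvd_succ hn2 hv1]; omega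
    rw [affS_of_not_dvd hn2 hv0 hv1]
    have : v ≠ u := by rintro rfl; exact hv1 hu1
    have : v ≠ u - 1 := by rintro rfl; exact hv0 (by simpa [sub_sub, add_comm] using hu1)
    omega
  rw [affS_of_not_dvd hn2 hu0 hu1]
  by_cases hv0 : (n : ℤ) ∣ v - i
  · rw [affS_of_dvd hn2 hv0]
    have : u ≠ v := by rintro rfl; exact hu0 hv0
    have : u ≠ v + 1 := by rintro rfl; exact hu1 (by simpa using hv0)
    omega
  by_cases hv1 : (n : ℤ) ∣ v - (i + 1)
  · rw [affS_of_dvd_succ hn2 hv1]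
    have : u ≠ v := by rintro rfl; exact hu1 hv1
    have : u ≠ v - 1 := by rintro rfl; exact hu0 (by simpa [sub_sub, add_comm] using hv1)
    omega
  rw [affS_of_not_dvd hn2 hv0 hv1]

end SimpleReflection

def IsVisibleDescent (z : Equiv.Perm ℤ) (i : ℤ) : Prop := z (i + 1) < z i ∧ z (i + 1) ≤ i

lemma isVisibleDescent_iff (hn : 0 < n) (hz : IsPeriodic n z) (i : ℤ) :
    IsVisibleDescent z i ↔ icodeEntry z (i + 1) < icodeEntry z i := by
  simp only [icodeEntry_eq_ncard]
  constructor
  · rintro ⟨hlt, hle⟩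
    have hsub : insert (i + 1) (icodeSet z (i + 1)) ⊆ icodeSet z i := by
      rintro j (rfl | ⟨h1, h2, h3⟩)
      · exact ⟨by omega, hlt, hle⟩
      · exact ⟨by omega, by omega, by omega⟩
    have hnotin : i + 1 ∉ icodeSet z (i + 1) := fun h => lt_irrefl _ h.1
    rw [← Nat.add_one_le_iff, ← Set.ncard_insert_of_notMem hnotin (icodeSet_finite hn hz _)]
    exact Set.ncard_le_ncard hsub (icodeSet_finite hn hz _)
  · intro hlt
    by_contra hnot
    have hne : z (i + 1) ≠ z i := z.injective.ne (by omega)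
    have hsub : icodeSet z i ⊆ icodeSet z (i + 1) := by
      rintro j ⟨h1, h2, h3⟩
      have hj : j ≠ i + 1 := by rintro rfl; exact hnot ⟨h2, h3⟩
      simp only [IsVisibleDescent, not_and_or, not_lt, not_le] at hnot
      exact ⟨by omega, by omega, by omega⟩
    exact hlt.not_ge (Set.ncard_le_ncard hsub (icodeSet_finite hn hz _))

/-- Below a point `j` with `z j < j`, the absence of visible descents forces `z x < x` at every
`x ≤ j`; at `x = z j` this contradicts `z (z j) = j`. -/
lemma exists_isVisibleDescent (hinv : Involutive z) (hne : z ≠ 1) : ∃ i, IsVisibleDescent z i := by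
  by_contra! hnone
  obtain ⟨j, hj⟩ : ∃ j, z j < j := by
    obtain ⟨x, hx⟩ : ∃ x, z x ≠ x := by
      by_contra! h
      exact hne (Equiv.ext h)
    rcases hx.lt_or_gt with h | h
    · exact ⟨x, h⟩
    · exact ⟨z x, by rwa [hinv x]⟩
  have hbelow : ∀ x ≤ j, z x < x := by
    intro x hx
    induction x, hx using Int.leInductionDown with
    | base => exact hj
    | pred x _ ih =>
      have hnot := hnone (x - 1)
      have hne : z (x - 1) ≠ z x := z.injective.ne (by omega)
      simp only [IsVisibleDescent, sub_add_cancel, not_and_or, not_lt, not_le] at hnot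
      omega
  have := hbelow (z j) hj.le
  rw [hinv j] at this
  omega

section DescentCases

variable {i : ℤ} (hn2 : 2 ≤ n) (hz : IsPeriodic n z) (hinv : Involutive z)

local notation "s" => affS n i

include hn2 hz hinv in
lemma icodeEntry_conj_affS (k : ℤ) : icodeEntry (s * z * s) (s k) =
    {j | s k < s j ∧ s (z j) < s (z k) ∧ s (z j) < s k}.ncard +
      if s k < s (z k) then 1 else 0 := by
  have hs := affS_involutive n i
  have hperiodic := ((isPeriodic_affS hn2 i).mul hz).mul (isPeriodic_affS hn2 i)
  rw [icodeEntry_eq_ncard_strictIcodeSet (by omega) hperiodic (involutive_conj hs hinv),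
    ← Set.ncard_preimage_of_injective_subset_range (affS n i).injective (by simp)]
  simp only [strictIcodeSet, Equiv.Perm.mul_apply, hs _, Set.preimage_ofPred_eq]

section Conjugation

variable (hvd : IsVisibleDescent z i) (hB : z (i + 1) ≠ i)

include hz hvd hB in
lemma IsVisibleDescent.apply_succ_lt_of_dvd {c : ℤ} (hc : (n : ℤ) ∣ c - i) :
    z (c + 1) < z c ∧ z (c + 1) < c := by
  have h1 := hz.apply_eq_of_dvd hc
  have h2 := hz.apply_eq_of_dvd (i := i + 1) (j := c + 1) (by simpa using hc)
  have := hvd.1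
  have := hvd.2
  omega

include hz hinv hvd in
lemma IsVisibleDescent.not_dvd_apply_succ_sub_succ : ¬ (n : ℤ) ∣ z (i + 1) - (i + 1) :=
    fun h => by
  have := hz.apply_eq_self_of_dvd hinv h
  have := hvd.2
  omega

include hn2 hz hinv hvd hB in
lemma apply_ne_affS_apply_succ : z i ≠ s (z (i + 1)) := by
  have ha := hvd.2
  have hnot := hvd.not_dvd_apply_succ_sub_succ hz hinv
  by_cases h0 : (n : ℤ) ∣ z (i + 1) - i
  · rw [affS_of_dvd hn2 h0]
    intro hb
    have h1 := hz.apply_eq_of_dvd h0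
    rw [hinv] at h1
    omega
  · rw [affS_of_not_dvd hn2 h0 hnot]
    exact (hvd.1).ne'

include hn2 hz hinv hvd hB in
lemma icodeEntry_conj_affS_of_not_dvd {k : ℤ} (hk0 : ¬ (n : ℤ) ∣ k - i)
    (hk1 : ¬ (n : ℤ) ∣ k - (i + 1)) : icodeEntry (s * z * s) k = icodeEntry z k := by
  have hs := affS_involutive n i
  have hsk : s k = k := affS_of_not_dvd hn2 hk0 hk1
  have key := icodeEntry_conj_affS (i := i) hn2 hz hinv k
  rw [hsk] at key
  rw [key, icodeEntry_eq_ncard_strictIcodeSet (by omega) hz hinv k]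
  have hind : k < s (z k) ↔ k < z k := by
    simpa only [hsk] using affS_lt_affS_iff hn2 (u := k) fun h => (h.trans hsk).symm
  simp only [hind]
  congr 2
  ext j
  simp only [strictIcodeSet, Set.mem_ofPred_eq]
  have h1 : k < s j ↔ k < j := by
    simpa only [hsk] using
      affS_lt_affS_iff (i := i) hn2 (u := k) (v := j) fun h => (h.trans hsk).symm
  have h3 : s (z j) < k ↔ z j < k := by
    simpa only [hsk] using affS_lt_affS_iff hn2 (u := z j) (v := k) fun h =>
      (hs.eq_iff.1 h.symm).trans hsk
  rw [h1, h3]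
  by_cases hex : z k = s (z j) ∧ z j ≠ z k
  -- `s` reverses `z j < z k` only for `{z j, z k} = {c, c + 1}` with `c ≡ i`; the descent at `c`
  -- then makes both sides fail.
  · obtain ⟨hzk, hne⟩ := hex
    suffices ¬ (k < j ∧ z j < k) by tauto
    have hk : k = z (s (z j)) := hinv.eq_iff.1 hzk
    by_cases hc0 : (n : ℤ) ∣ z j - i
    · rw [affS_of_dvd hn2 hc0] at hk
      have := (hvd.apply_succ_lt_of_dvd hz hB hc0).2
      omega
    by_cases hc1 : (n : ℤ) ∣ z j - (i + 1)
    · rw [affS_of_dvd_succ hn2 hc1] at hk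
      have := (hvd.apply_succ_lt_of_dvd hz hB (c := z j - 1) (by convert hc1 using 1; ring)).1
      rw [sub_add_cancel, hinv j] at this
      omega
    · exact absurd (hzk.trans (affS_of_not_dvd hn2 hc0 hc1)) hne.symm
  · rw [affS_lt_affS_iff hn2 fun h => by_contra fun hne => hex ⟨h, hne⟩]

include hn2 hz hinv hvd hB in
lemma icodeEntry_conj_affS_self : icodeEntry (s * z * s) i = icodeEntry z (i + 1) := by
  have hs := affS_involutive n i
  have hsi : s (i + 1) = i := affS_succ hn2 i
  have ha : z (i + 1) < i := lt_of_le_of_ne hvd.2 hB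
  have key := icodeEntry_conj_affS (i := i) hn2 hz hinv (i + 1)
  rw [hsi] at key
  rw [key, icodeEntry_eq_ncard_strictIcodeSet (by omega) hz hinv (i + 1),
    if_neg (by have := affS_le hn2 i (z (i + 1)); omega), if_neg (by omega), add_zero, add_zero]
  congr 1
  ext j
  simp only [strictIcodeSet, Set.mem_ofPred_eq]
  -- the comparisons that `s` may reverse single out `j = i`, `z j = i` and `z j = s (z (i + 1))`
  by_cases hj : j = i
  · rw [hj]
    have hlt : ¬ s (z i) < s (z (i + 1)) := by
      rw [affS_lt_affS_iff hn2 fun h =>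
        absurd (hs.eq_iff.1 h.symm) (apply_ne_affS_apply_succ hn2 hz hinv hvd hB)]
      exact (hvd.1).not_gt
    exact iff_of_false (fun h => hlt h.2.1) (fun h => by omega)
  by_cases hzj : z j = i
  · exact iff_of_false (fun h => by rw [hzj, affS_self hn2] at h; omega) (fun h => by omega)
  by_cases hex : z j = s (z (i + 1)) ∧ z j ≠ z (i + 1)
  · obtain ⟨hzj', hne⟩ := hex
    have hc0 : (n : ℤ) ∣ z (i + 1) - i := by
      by_contra hc0
      exact hne (hzj'.trans
        (affS_of_not_dvd hn2 hc0 (hvd.not_dvd_apply_succ_sub_succ hz hinv)))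
    rw [affS_of_dvd hn2 hc0] at hzj'
    have hj' : j = z (z (i + 1) + 1) := hinv.eq_iff.1 hzj'
    have := hz.apply_eq_of_dvd (i := i + 1) (j := z (i + 1) + 1) (by convert hc0 using 1; ring)
    have := affS_le hn2 i j
    exact iff_of_false (fun h => by omega) (fun h => by omega)
  have h1 : i < s j ↔ i + 1 < j := by
    simpa only [hsi] using
      affS_lt_affS_iff (i := i) hn2 (u := i + 1) (v := j) fun h => absurd (h.trans hsi) hj
  have h3 : s (z j) < i ↔ z j < i + 1 := by
    simpa only [hsi] using affS_lt_affS_iff (i := i) hn2 (u := z j) (v := i + 1) fun h =>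
      absurd ((hs.eq_iff.1 h.symm).trans hsi) hzj
  rw [h1, h3, affS_lt_affS_iff hn2 fun h =>
    by_contra fun hne => hex ⟨hs.eq_iff.1 h.symm, hne⟩]

include hn2 hz hinv hvd hB in
lemma setOf_affS_lt_eq_strictIcodeSet_sdiff :
    {j | s i < s j ∧ s (z j) < s (z i) ∧ s (z j) < s i} = strictIcodeSet z i \ {i + 1} := by
  have hs := affS_involutive n i
  have hsi : s i = i + 1 := affS_self hn2 i
  have ha : z (i + 1) < i := lt_of_le_of_ne hvd.2 hB
  ext j
  simp only [strictIcodeSet, Set.mem_sdiff, Set.mem_singleton_iff, Set.mem_ofPred_eq]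
  -- the comparisons that `s` may reverse single out `j = i + 1`, `z j = i + 1` and `z j = s (z i)`
  by_cases hj : j = i + 1
  · rw [hj]
    exact iff_of_false (fun h => by have := h.1; rw [hsi, affS_succ hn2] at this; omega)
      (fun h => h.2 rfl)
  simp only [hj, not_false_eq_true, and_true]
  rw [affS_lt_affS_iff hn2 (u := i) (v := j) fun h => absurd (h.trans hsi) hj]
  by_cases hzj : z j = i + 1
  · have : j = z (i + 1) := hinv.eq_iff.1 hzj
    exact iff_of_false (fun h => by omega) (fun h => by omega)
  rw [affS_lt_affS_iff hn2 (u := z j) (v := i) fun h =>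
    absurd ((hs.eq_iff.1 h.symm).trans hsi) hzj]
  by_cases hex : z i = s (z j) ∧ z j ≠ z i
  · suffices ¬ (i < j ∧ z j < i) by tauto
    obtain ⟨hzi, hne⟩ := hex
    have hzj' : z j = s (z i) := hs.eq_iff.1 hzi.symm
    by_cases hc0 : (n : ℤ) ∣ z i - i
    · rw [hz.apply_eq_self_of_dvd hinv hc0, hsi] at hzj'
      exact absurd hzj' hzj
    by_cases hc1 : (n : ℤ) ∣ z i - (i + 1)
    · rw [affS_of_dvd_succ hn2 hc1] at hzj'
      have hj' : j = z (z i - 1) := hinv.eq_iff.1 hzj'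
      have := hz.apply_eq_of_dvd (i := i) (j := z i - 1) (by convert hc1 using 1; ring)
      have := le_or_le_neg_of_dvd hc1 (by omega)
      rintro ⟨h1, h2⟩
      omega
    · rw [affS_of_not_dvd hn2 hc0 hc1] at hzj'
      exact absurd hzj' hne
  · rw [affS_lt_affS_iff hn2 fun h => by_contra fun hne => hex ⟨h, hne⟩]

include hn2 hz hinv hvd hB in
lemma icodeEntry_eq_icodeEntry_conj_affS_succ_add_one :
    icodeEntry z i = icodeEntry (s * z * s) (i + 1) + 1 := by
  have hsi : s i = i + 1 := affS_self hn2 i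
  have ha : z (i + 1) < i := lt_of_le_of_ne hvd.2 hB
  have hb : z i ≠ i + 1 := fun h => hB (hinv.eq_iff.1 h).symm
  have hind : s i < s (z i) ↔ i < z i := affS_lt_affS_iff hn2 fun h => absurd (h.trans hsi) hb
  have hmem : i + 1 ∈ strictIcodeSet z i := ⟨by omega, hvd.1, ha⟩
  rw [← hsi, icodeEntry_conj_affS hn2 hz hinv i,
    setOf_affS_lt_eq_strictIcodeSet_sdiff hn2 hz hinv hvd hB,
    icodeEntry_eq_ncard_strictIcodeSet (by omega) hz hinv i,
    ← Set.ncard_sdiff_singleton_add_one hmem (strictIcodeSet_finite (by omega) hz i)]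
  simp only [hind]
  ring

end Conjugation

section Swap

variable (hza : z (i + 1) = i)

local notation "InSwap" x => (n : ℤ) ∣ x - i ∨ (n : ℤ) ∣ x - (i + 1)

include hn2 hz hinv hza in
lemma apply_eq_affS_of_swap {x : ℤ} (hx : InSwap x) : z x = s x := by
  have hzi : z i = i + 1 := hinv.eq_iff.2 hza.symm
  rcases hx with hx | hx
  · rw [affS_of_dvd hn2 hx, hz.apply_eq_of_dvd hx, hzi]; ring
  · rw [affS_of_dvd_succ hn2 hx, hz.apply_eq_of_dvd hx, hza]; ring

include hn2 hz hinv hza in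
lemma not_swap_apply {x : ℤ} (hx : ¬ InSwap x) : ¬ InSwap (z x) := fun h => by
  have h' := apply_eq_affS_of_swap hn2 hz hinv hza h
  rw [hinv x] at h'
  have hzx : z x = x := by
    rw [(affS_involutive n i).eq_iff.1 h'.symm,
      affS_of_not_dvd hn2 (fun h' => hx (.inl h')) (fun h' => hx (.inr h'))]
  exact hx (hzx ▸ h)

include hn2 hz hinv hza in
lemma mul_affS_apply (x : ℤ) : (z * s) x = if InSwap x then x else z x := by
  rw [Equiv.Perm.mul_apply]
  split_ifs with hx
  · have hsx : InSwap (s x) := by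
      rcases hx with hx | hx
      · exact .inr (by rw [affS_of_dvd hn2 hx]; simpa using hx)
      · exact .inl (by rw [affS_of_dvd_succ hn2 hx]; convert hx using 1; ring)
    rw [apply_eq_affS_of_swap hn2 hz hinv hza hsx, affS_involutive]
  · rw [affS_of_not_dvd hn2 (fun h => hx (.inl h)) (fun h => hx (.inr h))]

include hn2 hz hinv hza in
lemma involutive_mul_affS : Involutive (z * s) := fun x => by
  rw [mul_affS_apply hn2 hz hinv hza x]
  split_ifs with hx
  · rw [mul_affS_apply hn2 hz hinv hza x, if_pos hx]
  · rw [mul_affS_apply hn2 hz hinv hza, if_neg (not_swap_apply hn2 hz hinv hza hx), hinv]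

include hn2 hz hinv hza in
lemma apply_of_swap {j : ℤ} (hj : InSwap j) :
    (z j = j + 1 ∧ (n : ℤ) ∣ j - i) ∨ (z j = j - 1 ∧ (n : ℤ) ∣ j - (i + 1)) := by
  rw [apply_eq_affS_of_swap hn2 hz hinv hza hj]
  rcases hj with hj | hj
  · exact .inl ⟨affS_of_dvd hn2 hj, hj⟩
  · exact .inr ⟨affS_of_dvd_succ hn2 hj, hj⟩

include hn2 hz hinv hza in
lemma icodeEntry_mul_affS_of_not_swap {k : ℤ} (hk : ¬ InSwap k) :
    icodeEntry (z * s) k = icodeEntry z k := by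
  simp only [icodeEntry_eq_ncard]
  congr 1
  ext j
  simp only [icodeSet, Set.mem_ofPred_eq, mul_affS_apply hn2 hz hinv hza, if_neg hk]
  split_ifs with hj
  · refine iff_of_false (fun h => by omega) fun ⟨h1, h2, h3⟩ => ?_
    rcases apply_of_swap hn2 hz hinv hza hj with ⟨hzj, -⟩ | ⟨hzj, hj1⟩
    · omega
    · exact hk (.inl (by rwa [show k = j - 1 by omega, sub_sub, add_comm 1 i]))
  · rfl

include hn2 hz hinv hza in
lemma icodeEntry_mul_affS_self : icodeEntry (z * s) i = icodeEntry z (i + 1) := by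
  simp only [icodeEntry_eq_ncard]
  congr 1
  ext j
  simp only [icodeSet, Set.mem_ofPred_eq, mul_affS_apply hn2 hz hinv hza,
    if_pos (show InSwap i from .inl (by simp)), hza]
  split_ifs with hj
  · have := le_affS hn2 i j
    rw [← apply_eq_affS_of_swap hn2 hz hinv hza hj] at this
    exact iff_of_false (fun h => by omega) (fun h => by omega)
  · have : j ≠ i + 1 := by rintro rfl; exact hj (.inr (by simp))
    omega

include hn2 hz hinv hza in
lemma icodeEntry_eq_icodeEntry_mul_affS_succ_add_one (hn : 0 < n) :
    icodeEntry z i = icodeEntry (z * s) (i + 1) + 1 := by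
  have hzi : z i = i + 1 := hinv.eq_iff.2 hza.symm
  have hins : icodeSet z i = insert (i + 1) (icodeSet (z * s) (i + 1)) := by
    ext j
    simp only [icodeSet, Set.mem_insert_iff, Set.mem_ofPred_eq, mul_affS_apply hn2 hz hinv hza,
      if_pos (show InSwap (i + 1) from .inr (by simp)), hzi]
    split_ifs with hj
    · by_cases hj1 : j = i + 1
      · rw [hj1, hza]
        omega
      rcases apply_of_swap hn2 hz hinv hza hj with ⟨hzj, -⟩ | ⟨hzj, -⟩ <;> omega
    · have : j ≠ i + 1 := by rintro rfl; exact hj (.inr (by simp))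
      omega
  have hnotin : i + 1 ∉ icodeSet (z * s) (i + 1) := fun h => lt_irrefl _ h.1
  rw [icodeEntry_eq_ncard, icodeEntry_eq_ncard, hins, Set.ncard_insert_of_notMem hnotin
    (icodeSet_finite hn (hz.mul (isPeriodic_affS hn2 i)) _)]

end Swap

end DescentCases

/-- When `z` swaps `i` and `i + 1`, conjugation by `s_i` would fix `z`; the swap is cut off
instead. -/
noncomputable def descentStep (n : ℕ) (z : Equiv.Perm ℤ) (i : ℤ) : Equiv.Perm ℤ :=
  if z (i + 1) = i then z * affS n i else affS n i * z * affS n i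

section DescentStep

variable {i : ℤ} (hn2 : 2 ≤ n) (hz : IsPeriodic n z) (hinv : Involutive z)

include hn2 hz in
lemma IsPeriodic.descentStep : IsPeriodic n (descentStep n z i) := by
  unfold AffineInvolution.descentStep
  split_ifs
  · exact hz.mul (isPeriodic_affS hn2 i)
  · exact ((isPeriodic_affS hn2 i).mul hz).mul (isPeriodic_affS hn2 i)

include hn2 hz hinv in
lemma involutive_descentStep : Involutive (descentStep n z i) := by
  unfold descentStep
  split_ifs with hza
  · exact involutive_mul_affS hn2 hz hinv hza
  · exact involutive_conj (affS_involutive n i) hinv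

include hn2 hz hinv in
lemma icodeEntry_descentStep (hvd : IsVisibleDescent z i) (k : ℤ) :
    icodeEntry (descentStep n z i) k =
      if (n : ℤ) ∣ k - i then icodeEntry z (i + 1)
      else if (n : ℤ) ∣ k - (i + 1) then icodeEntry z i - 1 else icodeEntry z k := by
  have hself : icodeEntry (descentStep n z i) i = icodeEntry z (i + 1) := by
    unfold descentStep
    split_ifs with hza
    · exact icodeEntry_mul_affS_self hn2 hz hinv hza
    · exact icodeEntry_conj_affS_self hn2 hz hinv hvd hza
  have hsucc : icodeEntry z i = icodeEntry (descentStep n z i) (i + 1) + 1 := by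
    unfold descentStep
    split_ifs with hza
    · exact icodeEntry_eq_icodeEntry_mul_affS_succ_add_one hn2 hz hinv hza (by omega)
    · exact icodeEntry_eq_icodeEntry_conj_affS_succ_add_one hn2 hz hinv hvd hza
  have hper : IsPeriodic n (descentStep n z i) := hz.descentStep hn2
  split_ifs with h0 h1
  · rw [icodeEntry_eq_of_dvd hper h0, hself]
  · rw [icodeEntry_eq_of_dvd hper h1]
    omega
  · unfold descentStep
    split_ifs with hza
    · exact icodeEntry_mul_affS_of_not_swap hn2 hz hinv hza (by tauto)
    · exact icodeEntry_conj_affS_of_not_dvd hn2 hz hinv hvd hza h0 h1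

end DescentStep

lemma mul_affS_ne_conj_affS (hn2 : 2 ≤ n) {y : Equiv.Perm ℤ} {i : ℤ} (hy : y (i + 1) = i)
    (hz : z (i + 1) ≤ i) : y * affS n i ≠ affS n i * z * affS n i := fun h => by
  have h' := congrArg (· (i + 1)) (mul_right_cancel h)
  simp only [Equiv.Perm.mul_apply, hy] at h'
  have := (affS_involutive n i).eq_iff.1 h'.symm
  rw [affS_self hn2] at this
  omega

lemma descentStep_injective (hn2 : 2 ≤ n) {y : Equiv.Perm ℤ} {i : ℤ}
    (hy : IsVisibleDescent y i) (hz : IsVisibleDescent z i)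
    (h : descentStep n y i = descentStep n z i) : y = z := by
  unfold descentStep at h
  split_ifs at h with hya hza hza
  · exact mul_right_cancel h
  · exact absurd h (mul_affS_ne_conj_affS hn2 hya hz.2)
  · exact absurd h.symm (mul_affS_ne_conj_affS hn2 hza hy.2)
  · exact mul_left_cancel (mul_right_cancel h)

lemma exists_mem_Icc_dvd_sub (hn : 0 < n) (x : ℤ) :
    ∃ r ∈ Finset.Icc (1 : ℤ) n, (n : ℤ) ∣ r - x := by
  have hnpos : (0 : ℤ) < n := by exact_mod_cast hn
  refine ⟨(x - 1) % n + 1, Finset.mem_Icc.2 ⟨?_, ?_⟩, ?_⟩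
  · linarith [Int.emod_nonneg (x - 1) hnpos.ne']
  · linarith [Int.emod_lt_of_pos (x - 1) hnpos]
  · rw [show (x - 1) % n + 1 - x = -((x - 1) - (x - 1) % n) by ring]
    exact dvd_neg.2 Int.dvd_self_sub_emod

lemma eq_of_mem_Icc_of_dvd_sub {r r' : ℤ} (hr : r ∈ Finset.Icc (1 : ℤ) n)
    (hr' : r' ∈ Finset.Icc (1 : ℤ) n) (h : (n : ℤ) ∣ r - r') : r = r' := by
  rw [Finset.mem_Icc] at hr hr'
  exact sub_eq_zero.1 (Int.eq_zero_of_abs_lt_dvd h (abs_sub_lt_iff.2 ⟨by omega, by omega⟩))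

lemma sum_Icc_lt_of_descent (hn2 : 2 ≤ n) {f g : ℤ → ℕ} {i : ℤ}
    (hf : ∀ x y, (n : ℤ) ∣ x - y → f x = f y)
    (hg : ∀ x, g x = if (n : ℤ) ∣ x - i then f (i + 1)
      else if (n : ℤ) ∣ x - (i + 1) then f i - 1 else f x)
    (hlt : f (i + 1) < f i) :
    ∑ x ∈ Finset.Icc (1 : ℤ) n, g x < ∑ x ∈ Finset.Icc (1 : ℤ) n, f x := by
  obtain ⟨r₀, hr₀, h₀⟩ := exists_mem_Icc_dvd_sub (n := n) (by omega) i
  obtain ⟨r₁, hr₁, h₁⟩ := exists_mem_Icc_dvd_sub (n := n) (by omega) (i + 1)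
  have h₁₀ : ¬ (n : ℤ) ∣ r₁ - i := fun h => by
    have := Int.le_of_dvd one_pos (by simpa using dvd_sub h h₁)
    omega
  have hr₁' : r₁ ∈ (Finset.Icc (1 : ℤ) n).erase r₀ :=
    Finset.mem_erase.2 ⟨fun h => h₁₀ (h ▸ h₀), hr₁⟩
  have hsplit : ∀ φ : ℤ → ℕ, ∑ x ∈ Finset.Icc (1 : ℤ) n, φ x =
      φ r₀ + (φ r₁ + ∑ x ∈ ((Finset.Icc (1 : ℤ) n).erase r₀).erase r₁, φ x) := fun φ => by
    rw [← Finset.add_sum_erase _ φ hr₀, ← Finset.add_sum_erase _ φ hr₁']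
  have hrest : ∑ x ∈ ((Finset.Icc (1 : ℤ) n).erase r₀).erase r₁, g x =
      ∑ x ∈ ((Finset.Icc (1 : ℤ) n).erase r₀).erase r₁, f x := by
    refine Finset.sum_congr rfl fun x hx => ?_
    obtain ⟨hx₁, hx₀, hx⟩ := Finset.mem_erase.1 hx |>.imp_right Finset.mem_erase.1
    have hxr : ∀ r ∈ Finset.Icc (1 : ℤ) n, ∀ c, (n : ℤ) ∣ r - c → x ≠ r → ¬ (n : ℤ) ∣ x - c :=
      fun r hr c hrc hne hxc => hne (eq_of_mem_Icc_of_dvd_sub hx hr (by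
        simpa using dvd_sub hxc hrc))
    rw [hg, if_neg (hxr r₀ hr₀ i h₀ hx₀), if_neg (hxr r₁ hr₁ (i + 1) h₁ hx₁)]
  rw [hsplit g, hsplit f, hrest, hg r₀, if_pos h₀, hg r₁, if_neg h₁₀, if_pos h₁, hf r₀ i h₀,
    hf r₁ (i + 1) h₁]
  omega

theorem eq_of_icodeEntry_eq (hn2 : 2 ≤ n) {y : Equiv.Perm ℤ} (hy : IsPeriodic n y)
    (hz : IsPeriodic n z) (hyi : Involutive y) (hzi : Involutive z)
    (h : ∀ x, icodeEntry y x = icodeEntry z x) : y = z := by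
  obtain ⟨N, hN⟩ : ∃ N, ∑ x ∈ Finset.Icc (1 : ℤ) n, icodeEntry y x = N := ⟨_, rfl⟩
  induction N using Nat.strong_induction_on generalizing y z with
  | _ N ih =>
  have hiff : ∀ i, IsVisibleDescent y i ↔ IsVisibleDescent z i := fun i => by
    rw [isVisibleDescent_iff (by omega) hy, isVisibleDescent_iff (by omega) hz, h, h]
  by_cases hy1 : y = 1
  · by_contra hne
    obtain ⟨i, hi⟩ := exists_isVisibleDescent hzi (hy1 ▸ Ne.symm hne)
    have := ((hiff i).2 hi).1
    rw [hy1] at this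
    exact absurd this (by simp)
  obtain ⟨i, hyd⟩ := exists_isVisibleDescent hyi hy1
  have hzd := (hiff i).1 hyd
  refine descentStep_injective hn2 hyd hzd (ih _ ?_ (hy.descentStep hn2) (hz.descentStep hn2)
    (involutive_descentStep hn2 hy hyi) (involutive_descentStep hn2 hz hzi) (fun x => ?_) rfl)
  · exact hN ▸ sum_Icc_lt_of_descent hn2 (fun x x' hx => icodeEntry_eq_of_dvd hy hx)
      (icodeEntry_descentStep hn2 hy hyi hyd) ((isVisibleDescent_iff (by omega) hy i).1 hyd)
  · rw [icodeEntry_descentStep hn2 hy hyi hyd, icodeEntry_descentStep hn2 hz hzi hzd, h, h, h]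

lemma involutive_of_inv_eq_self {α : Type*} {σ : Equiv.Perm α} (h : σ⁻¹ = σ) : Involutive σ :=
  fun x => by simpa only [h] using (Equiv.Perm.inv_eq_iff_eq.2 rfl : σ⁻¹ (σ x) = x)

lemma eq_one_of_isPeriodic_one (hz : IsPeriodic 1 z) (hinv : Involutive z) : z = 1 := by
  have htr : ∀ x, z x = z 0 + x := fun x => by simpa using hz.apply_eq_of_dvd (one_dvd (x - 0))
  have h0 := hinv 0
  rw [htr (z 0)] at h0
  ext x
  rw [htr x, Equiv.Perm.one_apply]
  omega

end AffineInvolution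

open AffineInvolution in
/-- the involution code is injective on affine involutions. -/
theorem icode_injective (n : ℕ) (hn : 0 < n) :
    ∀ y z : Equiv.Perm ℤ, IsAffine n y → IsAffine n z → y⁻¹ = y → z⁻¹ = z →
      (∀ i : ℤ, 1 ≤ i → i ≤ n → icodeEntry y i = icodeEntry z i) → y = z := by
  intro y z hy hz hyi hzi hcode
  have hy' := involutive_of_inv_eq_self hyi
  have hz' := involutive_of_inv_eq_self hzi
  obtain rfl | hn2 : n = 1 ∨ 2 ≤ n := by omega
  · rw [eq_one_of_isPeriodic_one hy.1 hy', eq_one_of_isPeriodic_one hz.1 hz']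
  refine eq_of_icodeEntry_eq hn2 hy.1 hz.1 hy' hz' fun x => ?_
  obtain ⟨r, hr, hrx⟩ := exists_mem_Icc_dvd_sub hn x
  rw [← icodeEntry_eq_of_dvd hy.1 hrx, ← icodeEntry_eq_of_dvd hz.1 hrx]
  exact hcode r (Finset.mem_Icc.1 hr).1 (Finset.mem_Icc.1 hr).2
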